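/- Fix γ > 1 and v₋ > 0. There exist constants C > 0 and δ* > 0 such that for every δ with 0 < δ < δ*, and for all v, w > 0 satisfying |p(v) − p(w)| < δ and |p(w) − p(v₋)| < δ, one has Q(v|w) ≤ ( 1/(2γ p(w)^{1+1/γ}) + Cδ ) · |p(v) − p(w)|². -/

import Mathlib

/-!
Write the relative energy in the pressure variable: `F(x) = Q(x^(-1/γ) | w)` as a function of
`x = p(v)`. With `q = p(w)` it satisfies `F(q) = F'(q) = 0` and `F''(q) = q^(-1-1/γ)/γ`, so the
second-order Taylor bound `F(x) ≤ sup F'' / 2 · (x - q)²` gives the leading coefficient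
`1/(2γ q^(1+1/γ))`. Since `p(w)` and `p(v)` stay within `δ < p(v₋)/4` of `p(v₋)`, all
pressures involved lie in `[p(v₋)/2, 2p(v₋)]`, where `F''` is Lipschitz uniformly in `q`; this
gives the correction `Cδ`.
-/

open Real Set

theorem ConvexOn.add_mul_sub_le_of_hasDerivAt {S : Set ℝ} {f : ℝ → ℝ} {f' x y : ℝ}
    (hf : ConvexOn ℝ S f) (hx : x ∈ S) (hy : y ∈ S) (hf' : HasDerivAt f f' x) :
    f x + f' * (y - x) ≤ f y := by
  rcases lt_trichotomy x y with hxy | rfl | hxy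
  · have := hf.le_slope_of_hasDerivAt hx hy hxy hf'
    rw [slope_def_field, le_div_iff₀ (sub_pos.2 hxy)] at this
    linarith
  · simp
  · have := hf.slope_le_of_hasDerivAt hy hx hxy hf'
    rw [slope_def_field, div_le_iff₀ (sub_pos.2 hxy)] at this
    linarith

theorem le_add_mul_sub_add_of_hasDerivAt_two_le {f f' f'' : ℝ → ℝ} {x y M : ℝ}
    (hf : ∀ z ∈ uIcc x y, HasDerivAt f (f' z) z)
    (hf' : ∀ z ∈ uIcc x y, HasDerivAt f' (f'' z) z)
    (hM : ∀ z ∈ uIcc x y, f'' z ≤ M) :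
    f y ≤ f x + f' x * (y - x) + M / 2 * (y - x) ^ 2 := by
  set g : ℝ → ℝ := fun z ↦ M / 2 * (z - x) ^ 2 - f z
  have hg : ∀ z ∈ uIcc x y, HasDerivAt g (M * (z - x) - f' z) z := fun z hz ↦ by
    refine (((((hasDerivAt_id' z).sub_const x).fun_pow 2).const_mul (M / 2)).fun_sub
      (hf z hz)).congr_deriv ?_
    ring
  have hg' : ∀ z ∈ uIcc x y, HasDerivAt (fun z ↦ M * (z - x) - f' z) (M - f'' z) z :=
    fun z hz ↦ by
      simpa using (((hasDerivAt_id' z).sub_const x).const_mul M).fun_sub (hf' z hz)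
  have hconv : ConvexOn ℝ (uIcc x y) g :=
    convexOn_of_hasDerivWithinAt2_nonneg (convex_uIcc x y)
      (fun z hz ↦ (hg z hz).continuousAt.continuousWithinAt)
      (fun z hz ↦ (hg z (interior_subset hz)).hasDerivWithinAt)
      (fun z hz ↦ (hg' z (interior_subset hz)).hasDerivWithinAt)
      (fun z hz ↦ sub_nonneg.2 (hM z (interior_subset hz)))
  have := hconv.add_mul_sub_le_of_hasDerivAt left_mem_uIcc right_mem_uIcc (hg x left_mem_uIcc)
  simp only [g, sub_self] at this
  linarith

theorem abs_rpow_neg_sub_rpow_neg_le {s m x y : ℝ} (hs : 0 < s) (hm : 0 < m) (hx : m ≤ x)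
    (hy : m ≤ y) : |x ^ (-s) - y ^ (-s)| ≤ s * m ^ (-s - 1) * |x - y| := by
  have hderiv :
      ∀ t ∈ Ici m, HasDerivWithinAt (fun t ↦ t ^ (-s)) (-s * t ^ (-s - 1)) (Ici m) t :=
    fun t ht ↦ (hasDerivAt_rpow_const (Or.inl (hm.trans_le ht).ne')).hasDerivWithinAt
  have hbound : ∀ t ∈ Ici m, ‖-s * t ^ (-s - 1)‖ ≤ s * m ^ (-s - 1) := fun t ht ↦ by
    have ht₀ : 0 < t := hm.trans_le ht
    rw [norm_mul, norm_neg, Real.norm_of_nonneg hs.le, Real.norm_of_nonneg (rpow_nonneg ht₀.le _)]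
    exact mul_le_mul_of_nonneg_left (rpow_le_rpow_of_nonpos hm ht (by linarith)) hs.le
  simpa [Real.norm_eq_abs] using
    (convex_Ici m).norm_image_sub_le_of_norm_hasDerivWithin_le hderiv hbound hy hx

theorem Real.mul_rpow_neg_add_one {x : ℝ} (hx : x ≠ 0) (a : ℝ) :
    x * x ^ (-(a + 1)) = x ^ (-a) := by
  rw [mul_comm, ← rpow_add_one hx, neg_add, neg_add_cancel_right]

noncomputable section

/-- `pressureRelEnergy γ (p w) (p v) = Q(v|w)`, see `pressureRelEnergy_rpow_neg`. -/
def pressureRelEnergy (γ q x : ℝ) : ℝ :=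
  (x ^ (1 - γ⁻¹) - q ^ (1 - γ⁻¹)) / (γ - 1) + q * (x ^ (-γ⁻¹) - q ^ (-γ⁻¹))

def pressureRelEnergyDeriv (γ q x : ℝ) : ℝ :=
  (x ^ (-γ⁻¹) - q * x ^ (-(γ⁻¹ + 1))) / γ

def pressureRelEnergyDeriv2 (γ q x : ℝ) : ℝ :=
  ((γ + 1) * q * x ^ (-(γ⁻¹ + 2)) - x ^ (-(γ⁻¹ + 1))) / γ ^ 2

end

variable {γ q x : ℝ}

theorem hasDerivAt_pressureRelEnergy (hγ₀ : γ ≠ 0) (hγ₁ : γ ≠ 1) (hx : 0 < x) :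
    HasDerivAt (pressureRelEnergy γ q) (pressureRelEnergyDeriv γ q x) x := by
  have h₁ := hasDerivAt_rpow_const (x := x) (p := 1 - γ⁻¹) (Or.inl hx.ne')
  have h₂ := hasDerivAt_rpow_const (x := x) (p := -γ⁻¹) (Or.inl hx.ne')
  refine (((h₁.sub_const _).div_const (γ - 1)).fun_add
    ((h₂.sub_const _).const_mul q)).congr_deriv ?_
  have : γ - 1 ≠ 0 := sub_ne_zero.2 hγ₁
  rw [pressureRelEnergyDeriv, show 1 - γ⁻¹ - 1 = -γ⁻¹ by ring,
    show -γ⁻¹ - 1 = -(γ⁻¹ + 1) by ring]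
  field_simp
  ring

theorem hasDerivAt_pressureRelEnergyDeriv (hγ₀ : γ ≠ 0) (hx : 0 < x) :
    HasDerivAt (pressureRelEnergyDeriv γ q) (pressureRelEnergyDeriv2 γ q x) x := by
  have h₁ := hasDerivAt_rpow_const (x := x) (p := -γ⁻¹) (Or.inl hx.ne')
  have h₂ := hasDerivAt_rpow_const (x := x) (p := -(γ⁻¹ + 1)) (Or.inl hx.ne')
  refine ((h₁.fun_sub (h₂.const_mul q)).div_const γ).congr_deriv ?_
  rw [pressureRelEnergyDeriv2, show -γ⁻¹ - 1 = -(γ⁻¹ + 1) by ring,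
    show -(γ⁻¹ + 1) - 1 = -(γ⁻¹ + 2) by ring]
  field_simp
  ring

theorem pressureRelEnergy_self : pressureRelEnergy γ q q = 0 := by
  simp [pressureRelEnergy]

theorem pressureRelEnergyDeriv_self (hq : 0 < q) : pressureRelEnergyDeriv γ q q = 0 := by
  rw [pressureRelEnergyDeriv, mul_rpow_neg_add_one hq.ne', sub_self, zero_div]

theorem pressureRelEnergyDeriv2_self (hγ₀ : γ ≠ 0) (hq : 0 < q) :
    pressureRelEnergyDeriv2 γ q q = q ^ (-(γ⁻¹ + 1)) / γ := by
  rw [pressureRelEnergyDeriv2, mul_assoc, show γ⁻¹ + 2 = γ⁻¹ + 1 + 1 by ring,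
    mul_rpow_neg_add_one hq.ne']
  field_simp
  ring

theorem exists_pressureRelEnergyDeriv2_le (hγ : 0 < γ) {m K : ℝ} (hm : 0 < m) (hmK : m ≤ K) :
    ∃ L > 0, ∀ q x, m ≤ q → q ≤ K → m ≤ x →
      pressureRelEnergyDeriv2 γ q x ≤ q ^ (-(γ⁻¹ + 1)) / γ + L * |x - q| := by
  set L₁ := (γ⁻¹ + 1) * m ^ (-(γ⁻¹ + 1) - 1)
  set L₂ := (γ⁻¹ + 2) * m ^ (-(γ⁻¹ + 2) - 1)
  have hK : 0 < K := hm.trans_le hmK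
  refine ⟨((γ + 1) * K * L₂ + L₁) / γ ^ 2, by positivity, fun q x hq hqK hx ↦ ?_⟩
  have hq₀ : 0 < q := hm.trans_le hq
  have h₁ : |x ^ (-(γ⁻¹ + 1)) - q ^ (-(γ⁻¹ + 1))| ≤ L₁ * |x - q| :=
    abs_rpow_neg_sub_rpow_neg_le (by positivity) hm hx hq
  have h₂ : |x ^ (-(γ⁻¹ + 2)) - q ^ (-(γ⁻¹ + 2))| ≤ L₂ * |x - q| :=
    abs_rpow_neg_sub_rpow_neg_le (by positivity) hm hx hq
  have key : (γ + 1) * q * (x ^ (-(γ⁻¹ + 2)) - q ^ (-(γ⁻¹ + 2)))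
      - (x ^ (-(γ⁻¹ + 1)) - q ^ (-(γ⁻¹ + 1))) ≤ ((γ + 1) * K * L₂ + L₁) * |x - q| :=
    calc _ ≤ (γ + 1) * q * |x ^ (-(γ⁻¹ + 2)) - q ^ (-(γ⁻¹ + 2))|
            + |x ^ (-(γ⁻¹ + 1)) - q ^ (-(γ⁻¹ + 1))| := by
          rw [sub_eq_add_neg]
          gcongr
          · exact le_abs_self _
          · exact neg_le_abs _
      _ ≤ (γ + 1) * K * (L₂ * |x - q|) + L₁ * |x - q| := by gcongr
      _ = _ := by ring
  rw [← pressureRelEnergyDeriv2_self hγ.ne' hq₀]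
  have : pressureRelEnergyDeriv2 γ q x - pressureRelEnergyDeriv2 γ q q
      = ((γ + 1) * q * (x ^ (-(γ⁻¹ + 2)) - q ^ (-(γ⁻¹ + 2)))
        - (x ^ (-(γ⁻¹ + 1)) - q ^ (-(γ⁻¹ + 1)))) / γ ^ 2 := by
    simp only [pressureRelEnergyDeriv2]
    ring
  rw [div_mul_eq_mul_div]
  linarith [div_le_div_of_nonneg_right key (sq_nonneg γ)]

theorem pressureRelEnergy_rpow_neg (hγ : γ ≠ 0) {v w : ℝ} (hv : 0 < v) (hw : 0 < w) :
    pressureRelEnergy γ (w ^ (-γ)) (v ^ (-γ))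
      = (v ^ (1 - γ) - w ^ (1 - γ)) / (γ - 1) + w ^ (-γ) * (v - w) := by
  have h₁ : ∀ u : ℝ, 0 < u → (u ^ (-γ)) ^ (1 - γ⁻¹) = u ^ (1 - γ) := fun u hu ↦ by
    rw [← rpow_mul hu.le, mul_sub, mul_one, neg_mul, mul_inv_cancel₀ hγ]
    ring_nf
  have h₂ : ∀ u : ℝ, 0 < u → (u ^ (-γ)) ^ (-γ⁻¹) = u := fun u hu ↦ by
    rw [← rpow_mul hu.le, neg_mul_neg, mul_inv_cancel₀ hγ, rpow_one]
  rw [pressureRelEnergy, h₁ v hv, h₁ w hw, h₂ v hv, h₂ w hw]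

theorem stmt8 (γ vm : ℝ) (hγ : 1 < γ) (hvm : 0 < vm) :
    ∃ C > (0:ℝ), ∃ δstar > (0:ℝ), ∀ δ : ℝ, 0 < δ → δ < δstar →
      ∀ v w : ℝ, 0 < v → 0 < w →
        |v ^ (-γ) - w ^ (-γ)| < δ → |w ^ (-γ) - vm ^ (-γ)| < δ →
        (v ^ (1 - γ) - w ^ (1 - γ)) / (γ - 1) + w ^ (-γ) * (v - w) ≤
          (1 / (2 * γ * (w ^ (-γ)) ^ (1 + 1 / γ)) + C * δ) * |v ^ (-γ) - w ^ (-γ)| ^ 2 := by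
  have hγ₀ : 0 < γ := by linarith
  set P := vm ^ (-γ)
  have hP : 0 < P := rpow_pos_of_pos hvm _
  obtain ⟨L, hL, hF''⟩ :=
    exists_pressureRelEnergyDeriv2_le hγ₀ (half_pos hP) (by linarith : P / 2 ≤ 2 * P)
  refine ⟨L / 2, by positivity, P / 4, by positivity, fun δ hδ hδP v w hv hw hvw hwP ↦ ?_⟩
  set p := v ^ (-γ)
  set q := w ^ (-γ)
  have hq : P / 2 ≤ q := by linarith [abs_lt.1 hwP]
  have hqP : q ≤ 2 * P := by linarith [abs_lt.1 hwP]
  have hp : P / 2 ≤ p := by linarith [abs_lt.1 hvw, abs_lt.1 hwP]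
  have hmem : ∀ x ∈ uIcc q p, P / 2 ≤ x := fun x hx ↦ (le_min hq hp).trans hx.1
  have hpos : ∀ x ∈ uIcc q p, 0 < x := fun x hx ↦ (half_pos hP).trans_le (hmem x hx)
  have hM : ∀ x ∈ uIcc q p, pressureRelEnergyDeriv2 γ q x ≤ q ^ (-(γ⁻¹ + 1)) / γ + L * δ :=
    fun x hx ↦ (hF'' q x hq hqP (hmem x hx)).trans <| by
      gcongr
      exact (abs_sub_left_of_mem_uIcc hx).trans hvw.le
  have key := le_add_mul_sub_add_of_hasDerivAt_two_le
    (fun x hx ↦ hasDerivAt_pressureRelEnergy hγ₀.ne' hγ.ne' (hpos x hx))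
    (fun x hx ↦ hasDerivAt_pressureRelEnergyDeriv hγ₀.ne' (hpos x hx)) hM
  rw [pressureRelEnergy_self, pressureRelEnergyDeriv_self (hpos q left_mem_uIcc),
    pressureRelEnergy_rpow_neg hγ₀.ne' hv hw] at key
  convert key using 1
  rw [sq_abs, show q ^ (-(γ⁻¹ + 1)) = 1 / q ^ (1 + 1 / γ) by
    rw [one_div, ← rpow_neg (hpos q left_mem_uIcc).le, one_div, add_comm]]
  field_simp
  ring
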